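/- arXiv:2602.16642 — 3 statements merged into one kernel-verified Lean document; each statement's English description precedes it below -/
import Mathlib

section
/- If a matrix sequence W_t in R^{K×p} satisfies W_{t+1} = (1-ηλ)W_t - ηV_{t+1} where V_{t+1} = βV_t + G_t with V_0 = 0 and each gradient G_t satisfies G_t^T 1 = 0, then the NC0 metric α_t := (1/K)‖W_t^T 1‖² satisfies α_t = (1-ηλ)^{2t} α_0 for all t ≥ 0. -/
open Finset

/-- SGD with momentum and decoupled weight decay: if the gradients `G t` have zero
column sums (`Gᵀ 1 = 0`), `V 0 = 0`, `V (t+1) = β V t + G t`, and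
`W (t+1) = (1 - ηλ) W t - η V (t+1)`, then the NC0 metric
`α t = (1/K) ‖W tᵀ 1‖²` satisfies `α t = (1 - ηλ)^(2t) α 0`. -/
theorem nc0_sgd_decoupled
    {K p : ℕ} (η lam β : ℝ) (hη : 0 < η) (hβ0 : 0 ≤ β) (hβ1 : β < 1)
    (W V G : ℕ → Matrix (Fin K) (Fin p) ℝ)
    (hV0 : V 0 = 0)
    (hV : ∀ t, V (t + 1) = β • V t + G t)
    (hW : ∀ t, W (t + 1) = (1 - η * lam) • W t - η • V (t + 1))
    (hG : ∀ t j, ∑ i, G t i j = 0)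
    (α : ℕ → ℝ)
    (hα : ∀ t, α t = (1 / (K : ℝ)) * ∑ j, (∑ i, W t i j) ^ 2) :
    ∀ t, α t = (1 - η * lam) ^ (2 * t) * α 0 := by
  have hVsum : ∀ t j, ∑ i, V t i j = 0 := by
    intro t
    induction t with
    | zero => intro j; simp [hV0]
    | succ n ih =>
      intro j
      simp only [hV, Matrix.add_apply, Matrix.smul_apply, smul_eq_mul,
        Finset.sum_add_distrib, ← Finset.mul_sum, ih, hG, mul_zero, add_zero]
  have hWsum : ∀ t j, ∑ i, W t i j = (1 - η * lam) ^ t * ∑ i, W 0 i j := by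
    intro t
    induction t with
    | zero => intro j; simp
    | succ n ih =>
      intro j
      simp only [hW, Matrix.sub_apply, Matrix.smul_apply, smul_eq_mul,
        Finset.sum_sub_distrib, ← Finset.mul_sum, ih, hVsum, mul_zero, sub_zero,
        pow_succ]
      ring
  intro t
  rw [hα, hα]
  have : ∀ j : Fin p, ((1 - η * lam) ^ t * ∑ i, W 0 i j) ^ 2
      = (1 - η * lam) ^ (2 * t) * (∑ i, W 0 i j) ^ 2 := by
    intro j; rw [mul_pow, ← pow_mul, mul_comm t 2]
  simp only [hWsum t, this, ← Finset.mul_sum]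
  ring
end

section
/- Under SGD with coupled weight decay with V_0 = 0 and zero-column-sum gradients G_t, the row-sum vector m_t = W_t^T 1 satisfies the second-order recursion m_{t+1} = (1+β-ηλ)m_t - β m_{t-1} for all t ≥ 1, with m_1 = (1-ηλ)m_0. -/
open Finset

/-- Under SGD with coupled weight decay with `V 0 = 0` and zero-column-sum
gradients, the row-sum vector `m_t = W_tᵀ 1` satisfies the second-order
recursion `m_{t+2} = (1+β-ηλ) m_{t+1} - β m_t`, with `m₁ = (1-ηλ) m₀`. -/
theorem rowSum_secondOrder_recursion
    {K p : ℕ} (β η lam : ℝ) (hβ0 : 0 ≤ β) (hβ1 : β < 1) (hη : 0 < η)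
    (hlam : 0 < lam)
    (W V G : ℕ → Matrix (Fin K) (Fin p) ℝ)
    (hV0 : V 0 = 0)
    (hV : ∀ t, V (t + 1) = β • V t + G t + lam • W t)
    (hW : ∀ t, W (t + 1) = W t - η • V (t + 1))
    (hG : ∀ t j, ∑ i, G t i j = 0)
    (m : ℕ → Fin p → ℝ)
    (hm : ∀ t j, m t j = ∑ i, W t i j) :
    (∀ t, m (t + 2) = (1 + β - η * lam) • m (t + 1) - β • m t) ∧
      m 1 = (1 - η * lam) • m 0 := by
  set s : ℕ → Fin p → ℝ := fun t j => ∑ i, V t i j with hs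
  have hs0 : ∀ j, s 0 j = 0 := by
    intro j; simp [hs, hV0]
  have hsrec : ∀ t j, s (t + 1) j = β * s t j + lam * m t j := by
    intro t j
    simp only [hs, hV t, Matrix.add_apply, Matrix.smul_apply, smul_eq_mul,
      Finset.sum_add_distrib, Finset.mul_sum, hG, hm]
    ring
  have hmrec : ∀ t j, m (t + 1) j = m t j - η * s (t + 1) j := by
    intro t j
    simp only [hm, hW t, Matrix.sub_apply, Matrix.smul_apply, smul_eq_mul,
      Finset.sum_sub_distrib, Finset.mul_sum, hs]
  constructor
  · intro t
    funext j
    have h1 := hmrec (t + 1) j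
    have h2 := hsrec (t + 1) j
    have h3 := hmrec t j
    simp only [Pi.smul_apply, Pi.sub_apply, smul_eq_mul]
    rw [h1, h2]
    have hse : η * s (t + 1) j = m t j - m (t + 1) j := by rw [h3]; ring
    nlinarith [hse]
  · funext j
    have h1 := hmrec 0 j
    have h2 := hsrec 0 j
    simp only [Pi.smul_apply, smul_eq_mul]
    rw [h1, h2, hs0]
    ring
end

section
/- Under sign GD with decoupled weight decay on the UFM with W_0 = 0, the NC0 quantity α_t = ⟨W_t W_t^T, (1/K)11^T⟩_F satisfies α_t = ((K-2)²/λ²)(1 - (1-ηλ)^t)², which increases monotonically from 0 and converges to (K-2)²/λ² > 0 as t → ∞ (for K ≥ 3). -/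
open Matrix Filter

/-!
Since the signed gradient is the constant matrix `S = J - 2I`, the iteration is affine in the
single direction `S`: `W_t = -((1 - (1 - ηλ)^t) / λ) • S`. The NC0 quantity of a matrix `A` is
`(1/K) ‖Aᵀ 1‖²`, and every column of `S` sums to `K - 2`, so `α_t` is `((K - 2)/λ)²` times
`(1 - r^t)²` with `r = 1 - ηλ ∈ (0, 1)`, which increases from `0` to `1`.
-/

section
variable {n R : Type*} [Fintype n]

theorem Matrix.trace_mul_transpose_mul_ones [CommSemiring R] (A : Matrix n n R) :
    trace (A * Aᵀ * of fun _ _ => (1 : R)) = ∑ k, (∑ i, A i k) ^ 2 := by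
  simp only [trace, diag, mul_apply, transpose_apply, of_apply, mul_one, sq, Finset.sum_mul_sum]
  rw [Finset.sum_comm]
  refine (Finset.sum_congr rfl fun _ _ => Finset.sum_comm).trans ?_
  exact Finset.sum_comm.trans (Finset.sum_congr rfl fun _ _ => Finset.sum_comm)

theorem Matrix.sum_apply_ones_sub_two_smul_one [DecidableEq n] [Ring R] (k : n) :
    ∑ i, ((of fun _ _ => (1 : R)) - 2 • (1 : Matrix n n R) : Matrix n n R) i k =
      Fintype.card n - 2 := by
  simp only [sub_apply, Matrix.smul_apply, one_apply, of_apply, Finset.sum_sub_distrib]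
  simp

end

theorem decoupled_iterate_eq_smul {𝕜 E : Type*} [Field 𝕜] [AddCommGroup E] [Module 𝕜 E]
    {η lam : 𝕜} (hlam : lam ≠ 0) (S : E) {W : ℕ → E} (hW0 : W 0 = 0)
    (hW : ∀ t, W (t + 1) = W t - η • (S + lam • W t)) (t : ℕ) :
    W t = (-(1 - (1 - η * lam) ^ t) / lam) • S := by
  induction t with
  | zero => simp [hW0]
  | succ t ih =>
    rw [hW, ih]
    match_scalars
    field_simp
    ring

theorem monotone_one_sub_pow_sq {r : ℝ} (hr₀ : 0 ≤ r) (hr₁ : r ≤ 1) :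
    Monotone fun t : ℕ => (1 - r ^ t) ^ 2 := fun _ _ hst =>
  pow_le_pow_left₀ (sub_nonneg.2 (pow_le_one₀ hr₀ hr₁))
    (sub_le_sub_left (pow_right_anti₀ hr₀ hr₁ hst) 1) 2

theorem tendsto_one_sub_pow_sq {r : ℝ} (hr₀ : 0 ≤ r) (hr₁ : r < 1) :
    Tendsto (fun t : ℕ => (1 - r ^ t) ^ 2) atTop (nhds 1) := by
  simpa using ((tendsto_pow_atTop_nhds_zero_of_lt_one hr₀ hr₁).const_sub 1).pow 2

/-- Sign GD with decoupled weight decay on the UFM with `W 0 = 0`, where the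
signed gradient is constantly `J - 2I`: the NC0 quantity
`α_t = ⟨W_t W_tᵀ, (1/K)J⟩_F` equals `((K-2)²/λ²)(1-(1-ηλ)^t)²`; it is monotone
increasing from `0` and converges to `(K-2)²/λ² > 0`. -/
theorem signGD_decoupled_avoids_NC0
    {K : ℕ} (hK : 3 ≤ K) (η lam : ℝ) (hη : 0 < η) (hlam : 0 < lam)
    (hprod : η * lam < 1)
    (J : Matrix (Fin K) (Fin K) ℝ) (hJ : J = Matrix.of fun _ _ => (1 : ℝ))
    (W : ℕ → Matrix (Fin K) (Fin K) ℝ) (hW0 : W 0 = 0)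
    (hW : ∀ t, W (t + 1) = W t - η •
      ((J - 2 • (1 : Matrix (Fin K) (Fin K) ℝ)) + lam • W t))
    (α : ℕ → ℝ)
    (hα : ∀ t, α t = Matrix.trace ((W t * (W t)ᵀ)ᵀ * ((K : ℝ)⁻¹ • J))) :
    (∀ t, α t = (((K : ℝ) - 2) ^ 2 / lam ^ 2) * (1 - (1 - η * lam) ^ t) ^ 2) ∧
      Monotone α ∧ α 0 = 0 ∧
      Tendsto α atTop (nhds (((K : ℝ) - 2) ^ 2 / lam ^ 2)) ∧
      0 < ((K : ℝ) - 2) ^ 2 / lam ^ 2 := by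
  subst hJ
  have hK₂ : (0 : ℝ) < K - 2 := by
    have : (3 : ℝ) ≤ K := by exact_mod_cast hK
    linarith
  have hα_eq : ∀ t, α t = (((K : ℝ) - 2) ^ 2 / lam ^ 2) * (1 - (1 - η * lam) ^ t) ^ 2 := by
    intro t
    rw [hα, transpose_mul, transpose_transpose, Matrix.mul_smul, trace_smul,
      trace_mul_transpose_mul_ones, decoupled_iterate_eq_smul hlam.ne' _ hW0 hW]
    simp only [Matrix.smul_apply, smul_eq_mul, ← Finset.mul_sum, sum_apply_ones_sub_two_smul_one]
    simp only [Fintype.card_fin, Finset.sum_const, Finset.card_univ, nsmul_eq_mul]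
    field_simp
  have hα_fun : α = fun t => (((K : ℝ) - 2) ^ 2 / lam ^ 2) * (1 - (1 - η * lam) ^ t) ^ 2 :=
    funext hα_eq
  have hr₀ : 0 ≤ 1 - η * lam := by linarith
  have hr₁ : 1 - η * lam < 1 := by linarith [mul_pos hη hlam]
  refine ⟨hα_eq, ?_, by simp [hα_fun], ?_, by positivity⟩
  · rw [hα_fun]
    exact (monotone_one_sub_pow_sq hr₀ hr₁.le).const_mul (by positivity)
  · rw [hα_fun]
    simpa using (tendsto_one_sub_pow_sq hr₀ hr₁).const_mul (((K : ℝ) - 2) ^ 2 / lam ^ 2)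
end
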